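/- arXiv:1703.09135 — 2 statements merged into one kernel-verified Lean document; each statement's English description precedes it below -/
import Mathlib

section
/- Let B be the 2×2 complex matrix with rows (μ₁, b) and (0, μ₂), where μ₁, μ₂, b are nonzero complex numbers. Then there do not exist a nonzero complex number μ and an invertible 2×2 complex matrix P such that (1/μ)·P·B·P̄ᵀ is Hermitian. -/
/-! Congruence `A ↦ P * A * Pᴴ` by an invertible `P` reflects being Hermitian, so `μ⁻¹ • B` itself
would be Hermitian; but its entry below the diagonal is `0` while the one above is `μ⁻¹ * b ≠ 0`. -/

open Matrix

theorem Matrix.IsHermitian.of_mul_mul_conjTranspose {n 𝕜 : Type*} [Fintype n] [DecidableEq n]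
    [CommRing 𝕜] [StarRing 𝕜] {A P : Matrix n n 𝕜} (hP : IsUnit P.det)
    (h : (P * A * Pᴴ).IsHermitian) : A.IsHermitian := by
  have hPH : IsUnit Pᴴ.det := by simpa only [det_conjTranspose] using hP.star
  have hA : A = P⁻¹ * (P * A * Pᴴ) * P⁻¹ᴴ := by
    rw [conjTranspose_nonsing_inv, ← mul_assoc, ← mul_assoc, nonsing_inv_mul P hP, one_mul,
      mul_assoc, mul_nonsing_inv Pᴴ hPH, mul_one]
  rw [hA]
  exact isHermitian_mul_mul_conjTranspose _ h

theorem flattening_stmt1_general (μ₁ μ₂ b : ℂ) (hb : b ≠ 0) :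
    ¬ ∃ (μ : ℂ) (P : Matrix (Fin 2) (Fin 2) ℂ), μ ≠ 0 ∧ IsUnit P.det ∧
      (μ⁻¹ • (P * !![μ₁, b; 0, μ₂] * Pᴴ)).IsHermitian := by
  rintro ⟨μ, P, hμ, hP, hH⟩
  rw [← smul_mul, ← Matrix.mul_smul] at hH
  have hB : (μ⁻¹ • !![μ₁, b; 0, μ₂]).IsHermitian := hH.of_mul_mul_conjTranspose hP
  have hμb : μ⁻¹ * b = 0 := by simpa using (hB.apply 0 1).symm
  exact mul_ne_zero (inv_ne_zero hμ) hb hμb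

/-- An upper-triangular invertible `2×2` complex matrix with nonzero off-diagonal entry
cannot be made Hermitian by congruence and scaling. -/
theorem flattening_stmt1 (μ₁ μ₂ b : ℂ) (hμ₁ : μ₁ ≠ 0) (hμ₂ : μ₂ ≠ 0) (hb : b ≠ 0) :
    ¬ ∃ (μ : ℂ) (P : Matrix (Fin 2) (Fin 2) ℂ), μ ≠ 0 ∧ IsUnit P.det ∧
      (μ⁻¹ • (P * !![μ₁, b; 0, μ₂] * Pᴴ)).IsHermitian :=
  flattening_stmt1_general μ₁ μ₂ b hb
end

section
/- Suppose for each quadruple of nonnegative integers (t, s, r, h) with t+s+r+h = m+1, complex numbers Ψ_[tsrh] are given (with Ψ_[tsrh] := 0 if any index is negative), satisfying the relation (s+1)Ψ_[t−1,s+1,r,h] + (s+1)Ψ_[t,s+1,r−1,h] − (t+1)Ψ_[t+1,s−1,r,h] − (t+1)Ψ_[t+1,s,r,h−1] = 0 for all t,s,r ≥ 0 and h = m+1−t−s−r ≥ 0. Fix h₀ ≥ −1 and suppose Ψ_[tsrh] = 0 for all h ≤ h₀. Define Ψ^{(k)}_[s,h] = Σ_t (−1)^{m+1−t−s−h} C(t,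 k) Ψ_[t,s,m+1−t−s−h,h] (sum over all integers t, with binomial coefficient C(t,k) = 0 for t < k). Then for all s ≥ 0 and k ≥ 1: (s+1)·Ψ^{(k−1)}_[s+1, h₀+1] = (k+1)·Ψ^{(k+1)}_[s−1, h₀+1]. -/
/-!
On the slice `h = h₀ + 1` the last term of the recursion vanishes, leaving
`(s+1) (A (t-1) + A t) = (t+1) B (t+1)` between the rows `A t = Ψ_[t,s+1,·,h]` and
`B t = Ψ_[t,s-1,·,h]`. Weight this by `(-1)^t C(t,k)` and sum over `t`: by Pascal's rule and
telescoping the left side becomes `-(s+1) Ψ^{(k-1)}_[s+1,h]`, and by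
`(t+1) C(t,k) = (k+1) C(t+1,k+1)` the right side becomes `-(k+1) Ψ^{(k+1)}_[s-1,h]`.
Boundary terms vanish because `Ψ` does at negative indices.
-/

open Finset

lemma sum_range_succ_shift_eq {M : Type*} [AddCommMonoid M] (g : ℕ → M) (N : ℕ)
    (h0 : g 0 = 0) (hN : g N = 0) :
    ∑ t ∈ range N, g (t + 1) = ∑ t ∈ range N, g t := by
  have h := sum_range_succ' g N
  rw [sum_range_succ, hN, h0, add_zero, add_zero] at h
  exact h.symm

section AlternatingChooseSum

variable {R : Type*} [CommRing R]

/-- Up to the sign `(-1)^(m+1-s-h)`, the paper's `Ψ^{(k)}_[s,h]` is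
`altChooseSum (m + 2) k (fun t => Ψ_[t, s, m+1-t-s-h, h])`. -/
def altChooseSum (N j : ℕ) (f : ℕ → R) : R :=
  ∑ t ∈ range N, (-1) ^ t * (t.choose j : R) * f t

lemma altChooseSum_eq_sum_choose_succ_mul_add (N j : ℕ) (A : ℕ → R) (hA : A N = 0) :
    altChooseSum N j A =
      ∑ t ∈ range N, (-1) ^ t * ((t + 1).choose (j + 1) : R) * (A t + A (t + 1)) := by
  let g t := (-1 : R) ^ t * (t.choose (j + 1) : R) * A t
  have hshift : ∑ t ∈ range N, g (t + 1) = ∑ t ∈ range N, g t :=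
    sum_range_succ_shift_eq g N (by simp [g]) (by simp [g, hA])
  calc altChooseSum N j A
      = ∑ t ∈ range N, ((-1) ^ t * (t.choose j : R) * A t + (g t - g (t + 1))) := by
        rw [sum_add_distrib, sum_sub_distrib, hshift, sub_self, add_zero]; rfl
    _ = _ := sum_congr rfl fun t _ => by simp only [g, Nat.choose_succ_succ]; push_cast; ring

lemma sum_choose_add_two_eq_altChooseSum (N j : ℕ) (B : ℕ → R)
    (hB : ∀ n, N ≤ n → B n = 0) :
    ∑ t ∈ range N, (-1) ^ t * ((t + 2).choose (j + 2) : R) * B (t + 2) =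
      altChooseSum N (j + 2) B := by
  let g t := (-1 : R) ^ t * (t.choose (j + 2) : R) * B t
  have hshift₁ : ∑ t ∈ range N, g (t + 1) = ∑ t ∈ range N, g t :=
    sum_range_succ_shift_eq g N (by simp [g]) (by simp [g, hB N le_rfl])
  have hshift₂ : ∑ t ∈ range N, g (t + 1 + 1) = ∑ t ∈ range N, g (t + 1) :=
    sum_range_succ_shift_eq (fun t => g (t + 1)) N (by simp [g, Nat.choose_eq_zero_of_lt])
      (by simp [g, hB (N + 1) (by omega)])
  calc _ = ∑ t ∈ range N, g (t + 1 + 1) :=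
        sum_congr rfl fun t _ => by simp only [g, pow_succ]; ring
    _ = altChooseSum N (j + 2) B := by rw [hshift₂, hshift₁]; rfl

theorem mul_altChooseSum_eq_of_rec (c : R) (A B : ℕ → R) (N j : ℕ)
    (hA : A N = 0) (hB : ∀ n, N ≤ n → B n = 0)
    (hrec : ∀ n : ℕ, c * (A n + A (n + 1)) = (n + 2) * B (n + 2)) :
    c * altChooseSum N j A = (j + 2) * altChooseSum N (j + 2) B := by
  rw [altChooseSum_eq_sum_choose_succ_mul_add N j A hA,
    ← sum_choose_add_two_eq_altChooseSum N j B hB, mul_sum, mul_sum]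
  refine sum_congr rfl fun t _ => ?_
  have hchoose : ((t : R) + 2) * ((t + 1).choose (j + 1) : R) =
      ((t + 2).choose (j + 2) : R) * ((j : R) + 2) := by
    have := congrArg (Nat.cast (R := R)) (Nat.add_one_mul_choose_eq (t + 1) (j + 1))
    push_cast at this
    linear_combination this
  linear_combination
    (-1 : R) ^ t * B (t + 2) * hchoose + (-1) ^ t * ((t + 1).choose (j + 1) : R) * hrec t

end AlternatingChooseSum

lemma neg_one_zpow_sub_natCast {K : Type*} [DivisionRing K] (a : ℤ) (t : ℕ) :
    (-1 : K) ^ (a - t) = (-1) ^ a * (-1) ^ t := by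
  rw [zpow_sub₀ (by norm_num), zpow_natCast, div_eq_mul_inv, ← inv_pow, inv_neg_one]

section FlatteningRecursion

variable {K : Type*} [CommRing K]

def VanishesAtNegIndices (Ψ : ℤ → ℤ → ℤ → ℤ → K) : Prop :=
  ∀ t s r h : ℤ, (t < 0 ∨ s < 0 ∨ r < 0 ∨ h < 0) → Ψ t s r h = 0

def SatisfiesFlatteningRecursion (m : ℕ) (Ψ : ℤ → ℤ → ℤ → ℤ → K) : Prop :=
  ∀ t s r h : ℤ, 0 ≤ t → 0 ≤ s → 0 ≤ r → 0 ≤ h →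
    t + s + r + h = (m : ℤ) + 1 →
    ((s : K) + 1) * Ψ (t - 1) (s + 1) r h + ((s : K) + 1) * Ψ t (s + 1) (r - 1) h
      - ((t : K) + 1) * Ψ (t + 1) (s - 1) r h - ((t : K) + 1) * Ψ (t + 1) s r (h - 1) = 0

lemma slice_recursion {m : ℕ} {Ψ : ℤ → ℤ → ℤ → ℤ → K}
    (hneg : VanishesAtNegIndices Ψ) (hrel : SatisfiesFlatteningRecursion m Ψ)
    {h : ℤ} (hprev : ∀ t s r : ℤ, Ψ t s r (h - 1) = 0)
    {t s r : ℤ} (ht : 0 ≤ t) (hs : 0 ≤ s) (hsum : t + s + r + h = (m : ℤ) + 1) :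
    ((s : K) + 1) * (Ψ (t - 1) (s + 1) r h + Ψ t (s + 1) (r - 1) h) =
      ((t : K) + 1) * Ψ (t + 1) (s - 1) r h := by
  by_cases hrh : 0 ≤ r ∧ 0 ≤ h
  · linear_combination hrel t s r h ht hs hrh.1 hrh.2 hsum + ((t : K) + 1) * hprev (t + 1) s r
  · rw [hneg _ _ _ _ (by omega), hneg _ _ _ _ (by omega), hneg _ _ _ _ (by omega)]
    ring

theorem mul_altChooseSum_slice_eq {m : ℕ} {Ψ : ℤ → ℤ → ℤ → ℤ → K}
    (hneg : VanishesAtNegIndices Ψ) (hrel : SatisfiesFlatteningRecursion m Ψ)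
    {h : ℤ} (hprev : ∀ t s r : ℤ, Ψ t s r (h - 1) = 0) {s : ℤ} (hs : 0 ≤ s) (j : ℕ) :
    ((s : K) + 1) *
        altChooseSum (m + 2) j (fun t => Ψ t (s + 1) ((m : ℤ) + 1 - t - (s + 1) - h) h) =
      ((j : K) + 2) *
        altChooseSum (m + 2) (j + 2)
          (fun t => Ψ t (s - 1) ((m : ℤ) + 1 - t - (s - 1) - h) h) := by
  refine mul_altChooseSum_eq_of_rec _ _ _ _ _ (hneg _ _ _ _ (by push_cast; omega))
    (fun n hn => hneg _ _ _ _ (by omega)) fun n => ?_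
  have hrec := slice_recursion (t := n + 1) (r := m - n - s - h) hneg hrel hprev (by omega) hs
    (by ring)
  push_cast at hrec ⊢
  ring_nf at hrec ⊢
  exact hrec

end FlatteningRecursion

theorem flattening_stmt15_general (m : ℕ) (Ψ : ℤ → ℤ → ℤ → ℤ → ℂ)
    (hneg : ∀ t s r h : ℤ, (t < 0 ∨ s < 0 ∨ r < 0 ∨ h < 0) → Ψ t s r h = 0)
    (hrel : ∀ t s r h : ℤ, 0 ≤ t → 0 ≤ s → 0 ≤ r → 0 ≤ h →
      t + s + r + h = (m : ℤ) + 1 →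
      ((s : ℂ) + 1) * Ψ (t - 1) (s + 1) r h + ((s : ℂ) + 1) * Ψ t (s + 1) (r - 1) h
        - ((t : ℂ) + 1) * Ψ (t + 1) (s - 1) r h - ((t : ℂ) + 1) * Ψ (t + 1) s r (h - 1) = 0)
    (h₀ : ℤ)
    (hvan : ∀ t s r h : ℤ, h ≤ h₀ → Ψ t s r h = 0)
    (Ψk : ℕ → ℤ → ℤ → ℂ)
    (hΨk : ∀ (k : ℕ) (s h : ℤ), Ψk k s h =
      ∑ t ∈ Finset.range (m + 2),
        (-1 : ℂ) ^ ((m : ℤ) + 1 - (t : ℤ) - s - h) * (Nat.choose t k : ℂ) *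
          Ψ (t : ℤ) s ((m : ℤ) + 1 - (t : ℤ) - s - h) h) :
    ∀ (s : ℤ) (k : ℕ), 0 ≤ s → 1 ≤ k →
      ((s : ℂ) + 1) * Ψk (k - 1) (s + 1) (h₀ + 1)
        = ((k : ℂ) + 1) * Ψk (k + 1) (s - 1) (h₀ + 1) := by
  have hΨk_eq : ∀ k s h, Ψk k s h = (-1) ^ ((m : ℤ) + 1 - s - h) *
      altChooseSum (m + 2) k (fun t => Ψ t s ((m : ℤ) + 1 - t - s - h) h) := by
    intro k s h
    rw [hΨk, altChooseSum, mul_sum]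
    refine sum_congr rfl fun t _ => ?_
    rw [show (m : ℤ) + 1 - t - s - h = ((m : ℤ) + 1 - s - h) - t by ring,
      neg_one_zpow_sub_natCast]
    ring
  intro s k hs hk
  obtain ⟨j, rfl⟩ : ∃ j, k = j + 1 := ⟨k - 1, by omega⟩
  have hsign : (-1 : ℂ) ^ ((m : ℤ) + 1 - (s - 1) - (h₀ + 1)) =
      (-1) ^ ((m : ℤ) + 1 - (s + 1) - (h₀ + 1)) := by
    rw [show (m : ℤ) + 1 - (s - 1) - (h₀ + 1) = (m : ℤ) + 1 - (s + 1) - (h₀ + 1) + 2 by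
      ring, zpow_add₀ (by norm_num)]
    norm_num
  have key := mul_altChooseSum_slice_eq hneg hrel (h := h₀ + 1)
    (fun t s r => hvan t s r _ (by omega)) hs j
  rw [hΨk_eq, hΨk_eq, hsign, Nat.add_sub_cancel]
  push_cast
  linear_combination (-1 : ℂ) ^ ((m : ℤ) + 1 - (s + 1) - (h₀ + 1)) * key

/-- Equation (B3) of Lemma 7.3: given coefficients `Ψ_[tsrh]` (vanishing for negative indices)
satisfying the recursion coming from the PDE `(z₂+z̄₂)Ψ₁ − (z₁+z̄₁)Ψ₂ = 0`, and vanishing for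
`h ≤ h₀`, the binomial-weighted sums
`Ψ^{(k)}_[s,h] = Σ_t (−1)^{m+1−t−s−h} C(t,k) Ψ_[t,s,m+1−t−s−h,h]`
satisfy `(s+1)·Ψ^{(k−1)}_[s+1, h₀+1] = (k+1)·Ψ^{(k+1)}_[s−1, h₀+1]` for all `s ≥ 0`, `k ≥ 1`. -/
theorem flattening_stmt15 (m : ℕ) (Ψ : ℤ → ℤ → ℤ → ℤ → ℂ)
    (hneg : ∀ t s r h : ℤ, (t < 0 ∨ s < 0 ∨ r < 0 ∨ h < 0) → Ψ t s r h = 0)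
    (hrel : ∀ t s r h : ℤ, 0 ≤ t → 0 ≤ s → 0 ≤ r → 0 ≤ h →
      t + s + r + h = (m : ℤ) + 1 →
      ((s : ℂ) + 1) * Ψ (t - 1) (s + 1) r h + ((s : ℂ) + 1) * Ψ t (s + 1) (r - 1) h
        - ((t : ℂ) + 1) * Ψ (t + 1) (s - 1) r h - ((t : ℂ) + 1) * Ψ (t + 1) s r (h - 1) = 0)
    (h₀ : ℤ) (hh₀ : -1 ≤ h₀)
    (hvan : ∀ t s r h : ℤ, h ≤ h₀ → Ψ t s r h = 0)
    (Ψk : ℕ → ℤ → ℤ → ℂ)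
    (hΨk : ∀ (k : ℕ) (s h : ℤ), Ψk k s h =
      ∑ t ∈ Finset.range (m + 2),
        (-1 : ℂ) ^ ((m : ℤ) + 1 - (t : ℤ) - s - h) * (Nat.choose t k : ℂ) *
          Ψ (t : ℤ) s ((m : ℤ) + 1 - (t : ℤ) - s - h) h) :
    ∀ (s : ℤ) (k : ℕ), 0 ≤ s → 1 ≤ k →
      ((s : ℂ) + 1) * Ψk (k - 1) (s + 1) (h₀ + 1)
        = ((k : ℂ) + 1) * Ψk (k + 1) (s - 1) (h₀ + 1) :=
  flattening_stmt15_general m Ψ hneg hrel h₀ hvan Ψk hΨk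
end
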